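/- arXiv:2404.10418 — 2 statements merged into one kernel-verified Lean document; each statement's English description precedes it below -/
import Mathlib

section
/- Let f : (ℤ_q)^n → ℂ lie in U_{[k,m]}(n,q), the sum of eigenspaces of the adjacency operator of H(n,q) for eigenvalues n(q−1)−qj with k ≤ j ≤ m. Then for any coordinate i ∈ [n] and any a ≠ b in ℤ_q, the function f_{i,a,b} lies in U_{[k−1,m−1]}(n−1,q). -/
open Finset BigOperators
open scoped Classical

/-- The character `χ_u(x) = ω^{⟨u,x⟩}` on `(ℤ_q)^n`, with `ω = e^{2πi/q}`. -/
noncomputable def chi (q n : ℕ) (u x : Fin n → ZMod q) : ℂ :=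
  Complex.exp (2 * Real.pi * Complex.I * (((∑ i, u i * x i).val : ℕ) : ℂ) / q)

/-- Fourier coefficient `f̂(u) = q^{-n} Σ_x f(x) conj(χ_u(x))`. -/
noncomputable def fhat (q n : ℕ) [NeZero q] (f : (Fin n → ZMod q) → ℂ)
    (u : Fin n → ZMod q) : ℂ :=
  (1 / (q : ℂ) ^ n) * ∑ x, f x * (starRingEnd ℂ) (chi q n u x)

/-- Adjacency operator of the Hamming graph `H(n,q)`. -/
noncomputable def adjOp (q n : ℕ) [NeZero q] (f : (Fin n → ZMod q) → ℂ)
    (x : Fin n → ZMod q) : ℂ :=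
  ∑ y ∈ univ.filter (fun y => hammingDist x y = 1), f y

/-- Twice the number of edges `{x,y}` of `H(n,q)` with `f x ≠ f y`
(the number of ordered such pairs). -/
noncomputable def nuOrd (q n : ℕ) [NeZero q] {α : Type*} (f : (Fin n → ZMod q) → α) : ℕ :=
  (univ.filter (fun p : (Fin n → ZMod q) × (Fin n → ZMod q) =>
    hammingDist p.1 p.2 = 1 ∧ f p.1 ≠ f p.2)).card

/-- Coordinate `i` is relevant for `f`. -/
def Relevant {q n : ℕ} {α : Type*} (f : (Fin n → ZMod q) → α) (i : Fin n) : Prop :=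
  ∃ x y : Fin n → ZMod q, (∀ j, j ≠ i → x j = y j) ∧ f x ≠ f y

/-- The function `f_{i,a,b}` on `(ℤ_q)^n` obtained from `f` on `(ℤ_q)^{n+1}`. -/
noncomputable def restrictDiff {q n : ℕ} (f : (Fin (n + 1) → ZMod q) → ℂ)
    (i : Fin (n + 1)) (a b : ZMod q) : (Fin n → ZMod q) → ℂ :=
  fun y => f (i.insertNth a y) - f (i.insertNth b y)

/-- The size of the support of `g`. -/
noncomputable def suppCard (q n : ℕ) [NeZero q] (g : (Fin n → ZMod q) → ℂ) : ℕ :=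
  (univ.filter (fun y => g y ≠ 0)).card


noncomputable def ee (q : ℕ) (t : ZMod q) : ℂ :=
  Complex.exp (2 * Real.pi * Complex.I * (t.val : ℂ) / q)

lemma ee_add (q : ℕ) [NeZero q] (s t : ZMod q) : ee q (s + t) = ee q s * ee q t := by
  rw [ee, ee, ee, ← Complex.exp_add, Complex.exp_eq_exp_iff_exists_int]
  refine ⟨-(((s.val + t.val) / q : ℕ) : ℤ), ?_⟩
  have hc : (((s.val + t.val) % q : ℕ) : ℂ) + (q : ℂ) * (((s.val + t.val) / q : ℕ) : ℂ)
      = ((s.val : ℕ) : ℂ) + ((t.val : ℕ) : ℂ) := by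
    exact_mod_cast congrArg (Nat.cast : ℕ → ℂ) (Nat.mod_add_div (s.val + t.val) q)
  have key : (((s.val + t.val) % q : ℕ) : ℂ)
      = (s.val : ℂ) + (t.val : ℂ) - q * (((s.val + t.val) / q : ℕ) : ℂ) := by
    linear_combination hc
  rw [ZMod.val_add, key, Int.cast_neg, Int.cast_natCast]
  have hq : (q : ℂ) ≠ 0 := Nat.cast_ne_zero.mpr (NeZero.ne q)
  field_simp
  ring

lemma ee_zero (q : ℕ) [NeZero q] : ee q 0 = 1 := by
  simp [ee]

lemma ee_ne_zero (q : ℕ) (t : ZMod q) : ee q t ≠ 0 := Complex.exp_ne_zero _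

lemma conj_ee (q : ℕ) [NeZero q] (t : ZMod q) :
    (starRingEnd ℂ) (ee q t) = ee q (-t) := by
  have h1 : ee q t * ee q (-t) = 1 := by rw [← ee_add]; simp [ee_zero]
  have h2 : (starRingEnd ℂ) (ee q t) = (ee q t)⁻¹ := by
    rw [ee, ← Complex.exp_conj, ← Complex.exp_neg]
    congr 1
    simp only [map_div₀, map_mul, Complex.conj_I, Complex.conj_ofReal, map_ofNat,
      Complex.conj_natCast]
    ring
  rw [h2]
  exact (eq_inv_of_mul_eq_one_left (by rw [mul_comm]; exact h1)).symm

lemma ee_eq_one_iff (q : ℕ) [NeZero q] (t : ZMod q) : ee q t = 1 ↔ t = 0 := by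
  constructor
  · intro h
    rw [ee, Complex.exp_eq_one_iff] at h
    obtain ⟨kk, hk⟩ := h
    have hq : (q : ℂ) ≠ 0 := Nat.cast_ne_zero.mpr (NeZero.ne q)
    have hne : (2 * (Real.pi : ℂ) * Complex.I) ≠ 0 := by
      simp [Real.pi_ne_zero, Complex.I_ne_zero]
    set V : ℂ := (t.val : ℂ) with hV
    have h2 : V = (kk : ℂ) * q := by
      field_simp at hk
      apply mul_left_cancel₀ hne
      linear_combination (2 * (Real.pi : ℂ) * Complex.I) * hk
    have h3 : (t.val : ℤ) = kk * q := by
      have : ((t.val : ℤ) : ℂ) = ((kk * q : ℤ) : ℂ) := by push_cast; rw [← hV]; exact h2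
      exact_mod_cast this
    have hlt : (t.val : ℤ) < q := by exact_mod_cast ZMod.val_lt t
    have hnn : (0 : ℤ) ≤ (t.val : ℤ) := Int.ofNat_nonneg t.val
    have hq' : (0 : ℤ) < q := by exact_mod_cast Nat.pos_of_ne_zero (NeZero.ne q)
    have hk0 : kk = 0 := by
      rcases lt_trichotomy kk 0 with hh | hh | hh
    /- kk < 0 -/
      · exfalso; nlinarith [mul_neg_of_neg_of_pos hh hq']
      · exact hh
      · exfalso
        have h1 : (1 : ℤ) ≤ kk := hh
        nlinarith [mul_le_mul_of_nonneg_right h1 (le_of_lt hq')]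
    have : t.val = 0 := by
      rw [hk0, zero_mul] at h3; exact_mod_cast h3
    exact (ZMod.val_eq_zero t).mp this
  · intro h; subst h; exact ee_zero q

lemma sum_ee (q : ℕ) [NeZero q] (d : ZMod q) (hd : d ≠ 0) :
    ∑ c : ZMod q, ee q (c * d) = 0 := by
  have h : ee q d * ∑ c : ZMod q, ee q (c * d) = ∑ c : ZMod q, ee q (c * d) := by
    rw [Finset.mul_sum]
    rw [← Equiv.sum_comp (Equiv.addRight (1 : ZMod q)) (fun c => ee q (c * d))]
    apply Finset.sum_congr rfl
    intro c _
    simp only [Equiv.coe_addRight]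
    rw [add_mul, one_mul, ee_add, mul_comm]
  have hne : ee q d ≠ 1 := fun h' => hd ((ee_eq_one_iff q d).mp h')
  have h2 : (ee q d - 1) * ∑ c : ZMod q, ee q (c * d) = 0 := by linear_combination h
  rcases mul_eq_zero.mp h2 with h' | h'
  · exact absurd (sub_eq_zero.mp h') hne
  · exact h'

lemma sum_ee_ite (q : ℕ) [NeZero q] (d : ZMod q) :
    ∑ c : ZMod q, ee q (c * d) = if d = 0 then (q : ℂ) else 0 := by
  by_cases hd : d = 0
  · subst hd; simp [ee_zero, ZMod.card]
  · simp [hd, sum_ee q d hd]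

lemma chi_eq (q n : ℕ) (u x : Fin n → ZMod q) : chi q n u x = ee q (∑ i, u i * x i) := rfl

lemma dot_insertNth (q n : ℕ) [NeZero q] (i : Fin (n + 1)) (c c' : ZMod q)
    (u y : Fin n → ZMod q) :
    ∑ j, i.insertNth c u j * i.insertNth c' y j = c * c' + ∑ j, u j * y j := by
  rw [Fin.sum_univ_succAbove _ i]
  simp [Fin.insertNth_apply_same, Fin.insertNth_apply_succAbove]

lemma chi_insertNth (q n : ℕ) [NeZero q] (i : Fin (n + 1)) (c c' : ZMod q)
    (u y : Fin n → ZMod q) :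
    chi q (n + 1) (i.insertNth c u) (i.insertNth c' y) = ee q (c * c') * chi q n u y := by
  rw [chi_eq, chi_eq, dot_insertNth, ee_add]

lemma sum_split (q n : ℕ) [NeZero q] (i : Fin (n + 1)) (F : (Fin (n + 1) → ZMod q) → ℂ) :
    ∑ x, F x = ∑ c : ZMod q, ∑ y : Fin n → ZMod q, F (i.insertNth c y) := by
  have h1 := Fintype.sum_equiv (Fin.insertNthEquiv (fun _ => ZMod q) i)
    (fun p => F ((Fin.insertNthEquiv (fun _ => ZMod q) i) p)) F (fun p => rfl)
  rw [← h1, Fintype.sum_prod_type]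
  rfl

lemma hammingNorm_insertNth (q n : ℕ) [NeZero q] (i : Fin (n + 1)) (c : ZMod q)
    (u : Fin n → ZMod q) (hc : c ≠ 0) :
    hammingNorm (β := fun _ => ZMod q) (i.insertNth c u) = hammingNorm u + 1 := by
  unfold hammingNorm
  rw [Finset.card_filter, Finset.card_filter, Fin.sum_univ_succAbove _ i]
  simp [Fin.insertNth_apply_same, Fin.insertNth_apply_succAbove, hc, add_comm]

lemma innerSumEE (q : ℕ) [NeZero q] (c' a b : ZMod q) :
    ∑ c : ZMod q, (starRingEnd ℂ) (ee q (c * c')) * (ee q (c * a) - ee q (c * b))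
      = (if c' = a then (q : ℂ) else 0) - (if c' = b then (q : ℂ) else 0) := by
  have hterm : ∀ c : ZMod q,
      (starRingEnd ℂ) (ee q (c * c')) * (ee q (c * a) - ee q (c * b))
        = ee q (c * (a - c')) - ee q (c * (b - c')) := by
    intro c
    rw [conj_ee, mul_sub, ← ee_add, ← ee_add]
    congr 2 <;> ring
  rw [Finset.sum_congr rfl (fun c _ => hterm c), Finset.sum_sub_distrib,
    sum_ee_ite, sum_ee_ite]
  congr 2 <;> simp [sub_eq_zero, eq_comm]

lemma key (q n : ℕ) [NeZero q] (f : (Fin (n + 1) → ZMod q) → ℂ) (i : Fin (n + 1))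
    (a b : ZMod q) (u : Fin n → ZMod q) :
    fhat q n (restrictDiff f i a b) u
      = ∑ c : ZMod q, fhat q (n + 1) f (i.insertNth c u) * (ee q (c * a) - ee q (c * b)) := by
  have hq : (q : ℂ) ≠ 0 := Nat.cast_ne_zero.mpr (NeZero.ne q)
  have step1 : ∀ c : ZMod q,
      fhat q (n + 1) f (i.insertNth c u) * (ee q (c * a) - ee q (c * b))
        = (1 / (q : ℂ) ^ (n + 1)) * ∑ c' : ZMod q, ∑ y, f (i.insertNth c' y) *
            (starRingEnd ℂ) (chi q n u y) *
            ((starRingEnd ℂ) (ee q (c * c')) * (ee q (c * a) - ee q (c * b))) := by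
    intro c
    rw [fhat, sum_split q n i (fun x => f x * (starRingEnd ℂ) (chi q (n + 1) (i.insertNth c u) x)),
      mul_assoc]
    congr 1
    rw [Finset.sum_mul]
    refine Finset.sum_congr rfl fun c' _ => ?_
    rw [Finset.sum_mul]
    refine Finset.sum_congr rfl fun y _ => ?_
    rw [chi_insertNth, map_mul]
    ring
  rw [Finset.sum_congr rfl (fun c _ => step1 c), ← Finset.mul_sum]
  have swap : (∑ c : ZMod q, ∑ c' : ZMod q, ∑ y, f (i.insertNth c' y) *
        (starRingEnd ℂ) (chi q n u y) *
        ((starRingEnd ℂ) (ee q (c * c')) * (ee q (c * a) - ee q (c * b))))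
      = ∑ c' : ZMod q, ∑ y, f (i.insertNth c' y) * (starRingEnd ℂ) (chi q n u y) *
        ((if c' = a then (q : ℂ) else 0) - (if c' = b then (q : ℂ) else 0)) := by
    rw [Finset.sum_comm]
    refine Finset.sum_congr rfl fun c' _ => ?_
    rw [Finset.sum_comm]
    refine Finset.sum_congr rfl fun y _ => ?_
    rw [← Finset.mul_sum, innerSumEE]
  rw [swap]
  have collapse : (∑ c' : ZMod q, ∑ y, f (i.insertNth c' y) * (starRingEnd ℂ) (chi q n u y) *
        ((if c' = a then (q : ℂ) else 0) - (if c' = b then (q : ℂ) else 0)))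
      = (q : ℂ) * (∑ y, f (i.insertNth a y) * (starRingEnd ℂ) (chi q n u y))
        - (q : ℂ) * (∑ y, f (i.insertNth b y) * (starRingEnd ℂ) (chi q n u y)) := by
    have : ∀ c' : ZMod q, (∑ y, f (i.insertNth c' y) * (starRingEnd ℂ) (chi q n u y) *
          ((if c' = a then (q : ℂ) else 0) - (if c' = b then (q : ℂ) else 0)))
        = (if c' = a then (q : ℂ) * ∑ y, f (i.insertNth c' y) * (starRingEnd ℂ) (chi q n u y) else 0)
          - (if c' = b then (q : ℂ) * ∑ y, f (i.insertNth c' y) * (starRingEnd ℂ) (chi q n u y) else 0) := by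
      intro c'
      rw [← Finset.sum_mul]
      by_cases h1 : c' = a <;> by_cases h2 : c' = b <;>
        simp [h1, h2, mul_ite, ite_mul, mul_zero, zero_mul] <;> split_ifs <;> ring
    rw [Finset.sum_congr rfl (fun c' _ => this c'), Finset.sum_sub_distrib,
      Finset.sum_ite_eq' univ a, Finset.sum_ite_eq' univ b]
    simp
  rw [collapse, fhat]
  have : (∑ y, restrictDiff f i a b y * (starRingEnd ℂ) (chi q n u y))
      = (∑ y, f (i.insertNth a y) * (starRingEnd ℂ) (chi q n u y))
        - ∑ y, f (i.insertNth b y) * (starRingEnd ℂ) (chi q n u y) := by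
    rw [← Finset.sum_sub_distrib]
    refine Finset.sum_congr rfl fun y _ => ?_
    rw [restrictDiff, sub_mul]
  rw [this]
  field_simp
  ring

theorem stmt6 (q n k m : ℕ) [NeZero q] (hq : 2 ≤ q)
    (f : (Fin (n + 1) → ZMod q) → ℂ)
    (hf : ∀ u : Fin (n + 1) → ZMod q, fhat q (n + 1) f u ≠ 0 →
      k ≤ hammingNorm u ∧ hammingNorm u ≤ m)
    (i : Fin (n + 1)) (a b : ZMod q) (hab : a ≠ b) :
    ∀ u : Fin n → ZMod q, fhat q n (restrictDiff f i a b) u ≠ 0 →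
      k - 1 ≤ hammingNorm u ∧ hammingNorm u ≤ m - 1 := by
  intro u hu
  rw [key q n f i a b u] at hu
  obtain ⟨c, -, hc⟩ := Finset.exists_ne_zero_of_sum_ne_zero hu
  have h1 : fhat q (n + 1) f (i.insertNth c u) ≠ 0 := fun h => hc (by rw [h, zero_mul])
  have h2 : ee q (c * a) - ee q (c * b) ≠ 0 := fun h => hc (by rw [h, mul_zero])
  have hc0 : c ≠ 0 := by
    rintro rfl
    exact h2 (by rw [zero_mul, zero_mul, sub_self])
  have hnorm := hf _ h1
  rw [hammingNorm_insertNth q n i c u hc0] at hnorm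
  omega
end

section
/- Any Boolean function f : (ℤ_q)^n → {−1,1} of degree at most 1 (i.e., f̂(u) = 0 whenever |u| ≥ 2) has at most one relevant variable. -/
open Finset BigOperators
open scoped Classical

/-!
Fourier inversion writes `f = ∑ᵤ f̂(u) χᵤ`. When only characters of weight at most one occur,
each `χᵤ` depends on at most one coordinate, so the difference `f (x[i ↦ a]) - f (x[i ↦ b])`
does not depend on `x`. If two distinct coordinates `i` and `j` were relevant, compare the
values of `f` at `x[i ↦ s, j ↦ t]` for `s ∈ {a, b}`, `t ∈ {c, d}`: the two `i`-differences are
equal and nonzero, which for `±1` values forces the two values with `s = a` to coincide, so the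
`j`-difference vanishes.
-/

open Function

lemma AddChar.map_sum_eq_prod {ι A M : Type*} [AddCommMonoid A] [CommMonoid M]
    (ψ : AddChar A M) (s : Finset ι) (f : ι → A) : ψ (∑ i ∈ s, f i) = ∏ i ∈ s, ψ (f i) := by
  induction s using Finset.cons_induction with
  | empty => simp
  | cons i s _ ih => rw [Finset.sum_cons, Finset.prod_cons, AddChar.map_add_eq_mul, ih]

lemma two_le_hammingNorm_of_ne_zero {ι : Type*} {β : ι → Type*} [Fintype ι]
    [∀ i, DecidableEq (β i)] [∀ i, Zero (β i)] {u : ∀ i, β i} {i j : ι} (hij : i ≠ j)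
    (hi : u i ≠ 0) (hj : u j ≠ 0) : 2 ≤ hammingNorm u :=
  Finset.one_lt_card.mpr ⟨i, by simpa using hi, j, by simpa using hj, hij⟩

lemma eq_single_of_hammingNorm_lt_two {ι β : Type*} [Fintype ι] [DecidableEq ι] [DecidableEq β]
    [Zero β] {u : ι → β} {i : ι} (hu : hammingNorm u < 2) (hi : u i ≠ 0) :
    u = Pi.single i (u i) := by
  funext j
  by_cases hji : j = i
  · subst hji; simp
  · rw [Pi.single_eq_of_ne hji]
    by_contra hj
    exact hu.not_ge (two_le_hammingNorm_of_ne_zero hji hj hi)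

def AddSeparableAt {ι β α : Type*} [DecidableEq ι] [AddGroup α] (f : (ι → β) → α) (i : ι) :
    Prop :=
  ∀ (w w' : ι → β) (a b : β),
    f (update w i a) - f (update w i b) = f (update w' i a) - f (update w' i b)

section Fourier

variable {q n : ℕ} [NeZero q]

lemma chi_eq_stdAddChar (u x : Fin n → ZMod q) :
    chi q n u x = ZMod.stdAddChar (∑ i, u i * x i) := by
  rw [ZMod.stdAddChar_apply, ZMod.toCircle_apply, chi]

lemma chi_comm (u x : Fin n → ZMod q) : chi q n u x = chi q n x u := by
  simp only [chi_eq_stdAddChar, mul_comm]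

lemma chi_mul_conj_chi (u v x : Fin n → ZMod q) :
    chi q n u x * starRingEnd ℂ (chi q n v x) = chi q n (u - v) x := by
  rw [chi_eq_stdAddChar, chi_eq_stdAddChar, chi_eq_stdAddChar, ← AddChar.map_neg_eq_conj,
    ← AddChar.map_add_eq_mul, ← sub_eq_add_neg, ← Finset.sum_sub_distrib]
  simp only [Pi.sub_apply, sub_mul]

lemma sum_chi (w : Fin n → ZMod q) :
    ∑ x, chi q n w x = if w = 0 then (q : ℂ) ^ n else 0 := by
  simp only [chi_eq_stdAddChar, AddChar.map_sum_eq_prod]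
  rw [← Fintype.prod_sum (fun i t => ZMod.stdAddChar (w i * t))]
  simp only [mul_comm (w _), AddChar.sum_mulShift _ (ZMod.isPrimitive_stdAddChar q), ZMod.card]
  push_cast
  rw [Finset.prod_ite_zero]
  simp [funext_iff]

lemma sum_fhat_mul_chi (f : (Fin n → ZMod q) → ℂ) (x : Fin n → ZMod q) :
    ∑ u, fhat q n f u * chi q n u x = f x := by
  have hq : (q : ℂ) ^ n ≠ 0 := pow_ne_zero _ (Nat.cast_ne_zero.mpr (NeZero.ne q))
  calc ∑ u, fhat q n f u * chi q n u x
      = 1 / (q : ℂ) ^ n * ∑ y, f y * ∑ u, chi q n (x - y) u := by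
        simp only [fhat, mul_assoc, ← Finset.mul_sum, Finset.sum_mul]
        rw [Finset.sum_comm]
        refine congrArg _ (Finset.sum_congr rfl fun y _ => ?_)
        rw [Finset.mul_sum]
        refine Finset.sum_congr rfl fun u _ => ?_
        rw [← chi_mul_conj_chi, chi_comm u x, chi_comm u y]
        ring
    _ = f x := by
        simp only [sum_chi, sub_eq_zero, mul_ite, mul_zero, Finset.sum_ite_eq, Finset.mem_univ,
          if_true]
        field_simp

lemma chi_eq_of_apply_eq_zero {u x y : Fin n → ZMod q} {i : Fin n} (hu : u i = 0)
    (hxy : ∀ j, j ≠ i → x j = y j) : chi q n u x = chi q n u y := by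
  simp only [chi_eq_stdAddChar]
  congr 1
  refine Finset.sum_congr rfl fun j _ => ?_
  by_cases hji : j = i
  · simp [hji, hu]
  · rw [hxy j hji]

lemma chi_single (i : Fin n) (c : ZMod q) (x : Fin n → ZMod q) :
    chi q n (Pi.single i c) x = ZMod.stdAddChar (c * x i) := by
  simp [chi_eq_stdAddChar, Pi.single_apply]

lemma addSeparableAt_of_fhat_eq_zero {f : (Fin n → ZMod q) → ℂ}
    (hdeg : ∀ u : Fin n → ZMod q, 2 ≤ hammingNorm u → fhat q n f u = 0) (i : Fin n) :
    AddSeparableAt f i := by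
  intro w w' a b
  have term : ∀ u, fhat q n f u * (chi q n u (update w i a) - chi q n u (update w i b))
      = fhat q n f u * (chi q n u (update w' i a) - chi q n u (update w' i b)) := by
    intro u
    by_cases hui : u i = 0
    · have agree : ∀ (v : Fin n → ZMod q) j, j ≠ i → update v i a j = update v i b j :=
        fun v j hj => by simp only [update_of_ne hj]
      rw [chi_eq_of_apply_eq_zero hui (agree w), chi_eq_of_apply_eq_zero hui (agree w')]
      simp only [sub_self]
    by_cases hu : 2 ≤ hammingNorm u
    · simp only [hdeg u hu, zero_mul]
    · rw [eq_single_of_hammingNorm_lt_two (not_le.mp hu) hui]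
      simp only [chi_single, update_self]
  simpa only [← sum_fhat_mul_chi f, ← Finset.sum_sub_distrib, ← mul_sub] using
    Finset.sum_congr rfl fun u _ => term u

end Fourier

lemma relevant_iff_exists_update {q n : ℕ} {α : Type*} {f : (Fin n → ZMod q) → α} {i : Fin n} :
    Relevant f i ↔ ∃ x a b, f (update x i a) ≠ f (update x i b) := by
  constructor
  · rintro ⟨x, y, hxy, hf⟩
    refine ⟨x, x i, y i, ?_⟩
    rwa [update_eq_self, ← eq_update_iff.mpr ⟨rfl, fun j hj => (hxy j hj).symm⟩]
  · rintro ⟨x, a, b, hf⟩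
    exact ⟨update x i a, update x i b, fun j hj => by simp only [update_of_ne hj], hf⟩

lemma eq_of_sub_eq_sub_of_ne {R : Type*} [Ring R] [CharZero R] {a b c d : R}
    (ha : a = 1 ∨ a = -1) (hb : b = 1 ∨ b = -1) (hc : c = 1 ∨ c = -1) (hd : d = 1 ∨ d = -1)
    (hab : a ≠ b) (h : a - b = c - d) : a = c := by
  rcases ha with rfl | rfl <;> rcases hb with rfl | rfl <;> rcases hc with rfl | rfl <;>
    rcases hd with rfl | rfl <;> norm_num at *

lemma Relevant.eq_of_addSeparableAt {q n : ℕ} {f : (Fin n → ZMod q) → ℂ}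
    (hf : ∀ x, f x = 1 ∨ f x = -1) (hsep : ∀ i, AddSeparableAt f i) {i j : Fin n}
    (hi : Relevant f i) (hj : Relevant f j) : i = j := by
  obtain ⟨x, a, b, hab⟩ := relevant_iff_exists_update.mp hi
  obtain ⟨y, c, d, hcd⟩ := relevant_iff_exists_update.mp hj
  by_contra hij
  set p : ZMod q → ZMod q → ℂ := fun s t => f (update (update x i s) j t)
  have row : ∀ t, p a t - p b t = f (update x i a) - f (update x i b) := fun t => by
    simp only [p, update_comm hij]
    exact hsep i _ _ a b
  have col : ∀ s, p s c - p s d = f (update y j c) - f (update y j d) := fun s =>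
    hsep j _ _ c d
  have hac : p a c ≠ p b c := sub_ne_zero.mp (by rw [row c]; exact sub_ne_zero.mpr hab)
  have : p a c = p a d := eq_of_sub_eq_sub_of_ne (hf _) (hf _) (hf _) (hf _) hac
    ((row c).trans (row d).symm)
  exact hcd (by rw [← sub_eq_zero, ← col a, this, sub_self])

theorem stmt17_general (q n : ℕ) [NeZero q]
    (f : (Fin n → ZMod q) → ℂ) (hbool : ∀ x, f x = 1 ∨ f x = -1)
    (hdeg : ∀ u : Fin n → ZMod q, 2 ≤ hammingNorm u → fhat q n f u = 0) :
    (univ.filter (fun i : Fin n => Relevant f i)).card ≤ 1 :=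
  Finset.card_le_one.mpr fun _ hi _ hj =>
    (mem_filter.mp hi).2.eq_of_addSeparableAt hbool (addSeparableAt_of_fhat_eq_zero hdeg)
      (mem_filter.mp hj).2

theorem stmt17 (q n : ℕ) [NeZero q] (hq : 2 ≤ q) (hn : 1 ≤ n)
    (f : (Fin n → ZMod q) → ℂ) (hbool : ∀ x, f x = 1 ∨ f x = -1)
    (hdeg : ∀ u : Fin n → ZMod q, 2 ≤ hammingNorm u → fhat q n f u = 0) :
    (univ.filter (fun i : Fin n => Relevant f i)).card ≤ 1 :=
  stmt17_general q n f hbool hdeg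
end
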